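/- arXiv:2211.11395 — 4 statements merged into one kernel-verified Lean document; each statement's English description precedes it below -/
import Mathlib

section
/- Let G be a finite group, ι an automorphism of G with ι∘ι = id, and (V, ρ) a finite-dimensional complex representation of G. Suppose f : V → V* is a linear isomorphism satisfying f(ρ(ι(g))v) = ρ^∨(g)(f(v)) for all g ∈ G and v ∈ V. Define f' : V → V* by f'(v)(w) = f(w)(v) for v, w ∈ V. Then f' is also a linear isomorphism and satisfies the same intertwining relation: f'(ρ(ι(g))v) = ρ^∨(g)(f'(v)) for all g ∈ G and v ∈ V. -/
/-- Let `G` be a finite group, `ι` an involutive automorphism of `G`,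
and `(V, ρ)` a finite-dimensional complex representation. If `f : V ≃ V*` intertwines
`ρ ∘ ι` with the dual representation `ρ^∨`, then the map `f' : V → V*` defined by
`f' v w = f w v` is again a linear isomorphism intertwining `ρ ∘ ι` with `ρ^∨`. -/
theorem flip_intertwiner (G : Type) [Group G] [Finite G] (ι : G ≃* G)
    (hι : ∀ g : G, ι (ι g) = g)
    (V : Type) [AddCommGroup V] [Module ℂ V] [FiniteDimensional ℂ V]
    (ρ : Representation ℂ G V) (f : V ≃ₗ[ℂ] Module.Dual ℂ V)
    (hf : ∀ (g : G) (v : V), f (ρ (ι g) v) = ρ.dual g (f v)) :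
    Function.Bijective (f.toLinearMap.flip) ∧
      ∀ (g : G) (v : V), f.toLinearMap.flip (ρ (ι g) v) = ρ.dual g (f.toLinearMap.flip v) := by
  have hinj : Function.Injective f.toLinearMap.flip := by
    rw [← LinearMap.ker_eq_bot]
    rw [Submodule.eq_bot_iff]
    intro v hv
    have h0 : ∀ w : V, f w v = 0 := fun w => by
      have := congrFun (congrArg DFunLike.coe hv) w
      simpa using this
    rw [← Module.forall_dual_apply_eq_zero_iff ℂ v]
    intro φ
    obtain ⟨w, hw⟩ := f.surjective φ
    rw [← hw]; exact h0 w
  refine ⟨⟨hinj, ?_⟩, ?_⟩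
  · exact (LinearMap.injective_iff_surjective_of_finrank_eq_finrank
      (Subspace.dual_finrank_eq).symm).mp hinj
  · intro g v
    ext w
    have h := congrFun (congrArg DFunLike.coe (hf (ι g⁻¹) w)) v
    simp only [hι, Representation.dual_apply, Module.Dual.transpose_apply, ← map_inv ι, hι, inv_inv] at h
    simpa [Representation.dual_apply, LinearMap.flip_apply, Module.Dual.transpose_apply, LinearMap.comp_apply] using h.symm
end

section
/- Let G be a finite group, ι an automorphism of G with ι∘ι = id, and (V, ρ) an irreducible finite-dimensional complex representation of G. Suppose f : V → V* is a linear isomorphism satisfying f(ρ(ι(g))v) = ρ^∨(g)(f(v)) for all g ∈ G and v ∈ V. Then there exists ε ∈ {1, −1} such that f(w)(v) = ε · f(v)(w) for all v, w ∈ V (i.e. f = ε·(f∘ι)^∨). -/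
/-- A representation `(V, ρ)` is irreducible if `V` is nontrivial and the only
`G`-invariant subspaces of `V` are `⊥` and `⊤`. -/
def IsIrreducibleRep {k G V : Type} [CommRing k] [Group G] [AddCommGroup V] [Module k V]
    (ρ : Representation k G V) : Prop :=
  Nontrivial V ∧ ∀ p : Submodule k V, (∀ g : G, ∀ v ∈ p, ρ g v ∈ p) → p = ⊥ ∨ p = ⊤

/-- Let `G` be a finite group, `ι` an involutive automorphism of `G`,
and `(V, ρ)` an irreducible finite-dimensional complex representation. If `f : V ≃ V*`
intertwines `ρ ∘ ι` with the dual representation `ρ^∨`, then there is a sign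
`ε ∈ {1, -1}` with `f w v = ε * f v w` for all `v, w ∈ V` (i.e. `f = ε • (f ∘ ι)^∨`). -/
theorem twisted_sign_exists (G : Type) [Group G] [Finite G] (ι : G ≃* G)
    (hι : ∀ g : G, ι (ι g) = g)
    (V : Type) [AddCommGroup V] [Module ℂ V] [FiniteDimensional ℂ V]
    (ρ : Representation ℂ G V) (hirr : IsIrreducibleRep ρ)
    (f : V ≃ₗ[ℂ] Module.Dual ℂ V)
    (hf : ∀ (g : G) (v : V), f (ρ (ι g) v) = ρ.dual g (f v)) :
    ∃ ε : ℂ, (ε = 1 ∨ ε = -1) ∧ ∀ v w : V, f w v = ε * f v w := by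
  obtain ⟨hnt, hsub⟩ := hirr
  -- f' v w = f w v
  set f' : V →ₗ[ℂ] Module.Dual ℂ V := (f : V →ₗ[ℂ] Module.Dual ℂ V).flip with hf'def
  have hflip : ∀ v w : V, f' v w = f w v := fun v w => rfl
  -- f' also intertwines
  have hf' : ∀ (g : G) (v : V), f' (ρ (ι g) v) = ρ.dual g (f' v) := by
    intro g v
    ext w
    have h1 := hf (ι g⁻¹) w
    rw [hι] at h1
    have h2 : f (ρ g⁻¹ w) v = (ρ.dual (ι g⁻¹) (f w)) v := by rw [h1]
    have h3 : (ρ.dual (ι g⁻¹) (f w)) v = f w (ρ (ι g⁻¹)⁻¹ v) := rfl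
    have h4 : (ι g⁻¹)⁻¹ = ι g := by
      rw [map_inv, inv_inv]
    have h5 : (ρ.dual g (f' v)) w = f' v (ρ g⁻¹ w) := rfl
    rw [h5, hflip, hflip, h2, h3, h4]
  -- T := f.symm ∘ f'
  set T : V →ₗ[ℂ] V := (f.symm : Module.Dual ℂ V →ₗ[ℂ] V) ∘ₗ f' with hT
  have hTapp : ∀ v : V, T v = f.symm (f' v) := fun v => rfl
  have hcomm : ∀ (g : G) (v : V), T (ρ g v) = ρ g (T v) := by
    intro g v
    obtain ⟨h, rfl⟩ : ∃ h, ι h = g := ⟨ι g, hι g⟩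
    have := hf' h v
    have hsymm : ∀ φ : Module.Dual ℂ V, f.symm (ρ.dual h φ) = ρ (ι h) (f.symm φ) := by
      intro φ
      apply f.injective
      rw [hf h (f.symm φ), f.apply_symm_apply, f.apply_symm_apply]
    rw [hTapp, hTapp, this, hsymm]
  -- eigenvalue of T
  obtain ⟨c, hc⟩ := Module.End.exists_eigenvalue T
  obtain ⟨u, hu⟩ := hc.exists_hasEigenvector
  -- eigenspace is invariant hence everything
  set p : Submodule ℂ V := LinearMap.ker (T - c • LinearMap.id) with hp
  have hmem : ∀ v : V, v ∈ p ↔ T v = c • v := by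
    intro v
    simp [hp, LinearMap.mem_ker, sub_eq_zero]
  have hinv : ∀ g : G, ∀ v ∈ p, ρ g v ∈ p := by
    intro g v hv
    rw [hmem] at hv ⊢
    rw [hcomm, hv, map_smul]
  have hne : p ≠ ⊥ := by
    intro hbot
    have : u ∈ p := (hmem u).mpr hu.apply_eq_smul
    rw [hbot, Submodule.mem_bot] at this
    exact hu.2 this
  have htop : p = ⊤ := (hsub p hinv).resolve_left hne
  have hTall : ∀ v : V, T v = c • v := fun v =>
    (hmem v).mp (htop ▸ Submodule.mem_top)
  -- hence f' = c • f
  have hkey : ∀ v w : V, f w v = c * f v w := by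
    intro v w
    have : f' v = f (c • v) := by
      rw [← hTall v, hTapp, f.apply_symm_apply]
    have h2 := congrArg (fun φ => φ w) this
    simp only [map_smul] at h2
    calc f w v = f' v w := rfl
    _ = c * f v w := by rw [h2]; simp
  -- c² = 1
  obtain ⟨v, hv⟩ := exists_ne (0 : V)
  have hfv : f v ≠ 0 := fun h => hv (f.injective (by simp [h]))
  obtain ⟨w, hw⟩ : ∃ w, f v w ≠ 0 := by
    by_contra h
    push_neg at h
    exact hfv (LinearMap.ext h)
  have hc2 : c * c = 1 := by
    have h1 := hkey v w
    have h2 := hkey w v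
    rw [h1] at h2
    have h3 : (c * c - 1) * f v w = 0 := by linear_combination -h2
    rcases mul_eq_zero.mp h3 with h | h
    · linear_combination h
    · exact absurd h hw
  exact ⟨c, mul_self_eq_one_iff.mp hc2, hkey⟩
end

section
/- Let G be a finite group, ι an automorphism of G with ι∘ι = id, and (V, ρ) an irreducible finite-dimensional complex representation of G. Suppose f and h are both linear isomorphisms V → V* satisfying the intertwining relation f(ρ(ι(g))v) = ρ^∨(g)(f(v)) (resp. for h) for all g ∈ G, v ∈ V, with signs ε_f, ε_h ∈ {1, −1} determined by f(w)(v) = ε_f·f(v)(w) and h(w)(v) = ε_h·h(v)(w) for all v, w ∈ V. Then ε_f = ε_h; that is, the sign ε_ρ associated to ρ is independent of the choice of isomorphism. -/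
/-- Let `G` be a finite group, `ι` an involutive automorphism, and
`(V, ρ)` an irreducible finite-dimensional complex representation. If `f, h : V ≃ V*`
both intertwine `ρ ∘ ι` with `ρ^∨`, with signs `ε_f, ε_h ∈ {1, -1}` determined by
`f w v = ε_f * f v w` and `h w v = ε_h * h v w`, then `ε_f = ε_h`: the sign `ε_ρ`
is independent of the choice of intertwining isomorphism. -/
theorem twisted_sign_unique (G : Type) [Group G] [Finite G] (ι : G ≃* G)
    (hι : ∀ g : G, ι (ι g) = g)
    (V : Type) [AddCommGroup V] [Module ℂ V] [FiniteDimensional ℂ V]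
    (ρ : Representation ℂ G V) (hirr : IsIrreducibleRep ρ)
    (f h : V ≃ₗ[ℂ] Module.Dual ℂ V)
    (hf : ∀ (g : G) (v : V), f (ρ (ι g) v) = ρ.dual g (f v))
    (hh : ∀ (g : G) (v : V), h (ρ (ι g) v) = ρ.dual g (h v))
    (εf εh : ℂ) (hεf : εf = 1 ∨ εf = -1) (hεh : εh = 1 ∨ εh = -1)
    (hfε : ∀ v w : V, f w v = εf * f v w)
    (hhε : ∀ v w : V, h w v = εh * h v w) :
    εf = εh := by
  obtain ⟨hV, hsub⟩ := hirr
  have hV' : Nontrivial V := hV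
  set T : Module.End ℂ V := h.symm.toLinearMap ∘ₗ f.toLinearMap with hT
  have hTapp : ∀ v : V, h (T v) = f v := by
    intro v; simp [hT]
  have hcomm : ∀ (g : G) (v : V), T (ρ g v) = ρ g (T v) := by
    intro g v
    apply h.injective
    rw [hTapp]
    have h1 : f (ρ g v) = ρ.dual (ι g) (f v) := by
      conv_lhs => rw [← hι g]
      exact hf (ι g) v
    have h2 : h (ρ g (T v)) = ρ.dual (ι g) (h (T v)) := by
      conv_lhs => rw [← hι g]
      exact hh (ι g) (T v)
    rw [h1, h2, hTapp]
  obtain ⟨c, hc⟩ := Module.End.exists_eigenvalue T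
  have hinv : ∀ g : G, ∀ v ∈ Module.End.eigenspace T c, ρ g v ∈ Module.End.eigenspace T c := by
    intro g v hv
    rw [Module.End.mem_eigenspace_iff] at hv ⊢
    rw [hcomm, hv, map_smul]
  have heig : Module.End.eigenspace T c = ⊤ := by
    rcases hsub (Module.End.eigenspace T c) hinv with h1 | h2
    · exact absurd h1 hc
    · exact h2
  have hTc : ∀ v : V, T v = c • v := by
    intro v
    have : v ∈ Module.End.eigenspace T c := by rw [heig]; trivial
    exact Module.End.mem_eigenspace_iff.mp this
  have hfc : ∀ v : V, f v = c • h v := by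
    intro v
    rw [← hTapp v, hTc, map_smul]
  obtain ⟨v, hv0⟩ := exists_ne (0 : V)
  have hfv : f v ≠ 0 := fun hz => hv0 (f.injective (by simp [hz]))
  obtain ⟨w, hw⟩ : ∃ w, f v w ≠ 0 := by
    by_contra hall
    push_neg at hall
    exact hfv (LinearMap.ext fun w => hall w)
  have key : εf * f v w = εh * f v w := by
    have e1 : f w v = εf * f v w := hfε v w
    have e2 : f w v = εh * f v w := by
      rw [hfc w, hfc v]
      simp only [LinearMap.smul_apply, smul_eq_mul]
      rw [hhε v w]
      ring
    rw [← e1, ← e2]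
  exact mul_right_cancel₀ hw key
end

section
/- Let G be a finite group, ι an automorphism of G with ι∘ι = id, and (V, ρ) an irreducible finite-dimensional complex representation of G. Suppose B : V × V → ℂ is a nonzero bilinear form satisfying B(ρ(ι(g))v, ρ(g)w) = B(v, w) for all g ∈ G and v, w ∈ V. Then: (i) the complex vector space of all bilinear forms on V satisfying this invariance condition is one-dimensional (so B is unique up to a nonzero scalar and is automatically nondegenerate); and (ii) there exists ε ∈ {1, −1}, independent of the choice of B, such that B(v, w) = ε · B(w, v) for all v, w ∈ V. -/
/-- Let `G` be a finite group, `ι` an involutive automorphism, and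
`(V, ρ)` an irreducible finite-dimensional complex representation. Suppose `B ≠ 0` is a
bilinear form on `V` with `B (ρ (ι g) v, ρ g w) = B (v, w)` for all `g, v, w`. Then:
(i) the space of such invariant bilinear forms is one-dimensional — every invariant form
is a scalar multiple of `B`, and `B` is automatically nondegenerate; and (ii) there is a
sign `ε ∈ {1, -1}`, independent of the choice of `B`, with `B v w = ε * B w v`. -/
theorem invariant_bilinear_unique_and_sign (G : Type) [Group G] [Finite G] (ι : G ≃* G)
    (hι : ∀ g : G, ι (ι g) = g)
    (V : Type) [AddCommGroup V] [Module ℂ V] [FiniteDimensional ℂ V]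
    (ρ : Representation ℂ G V) (hirr : IsIrreducibleRep ρ)
    (B : V →ₗ[ℂ] V →ₗ[ℂ] ℂ) (hB : B ≠ 0)
    (hinv : ∀ (g : G) (v w : V), B (ρ (ι g) v) (ρ g w) = B v w) :
    (∀ B' : V →ₗ[ℂ] V →ₗ[ℂ] ℂ,
        (∀ (g : G) (v w : V), B' (ρ (ι g) v) (ρ g w) = B' v w) → ∃ c : ℂ, B' = c • B) ∧
    Function.Bijective (fun v : V => B v) ∧
    (∃ ε : ℂ, (ε = 1 ∨ ε = -1) ∧
      ∀ B' : V →ₗ[ℂ] V →ₗ[ℂ] ℂ, B' ≠ 0 →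
        (∀ (g : G) (v w : V), B' (ρ (ι g) v) (ρ g w) = B' v w) →
        ∀ v w : V, B' v w = ε * B' w v) := by
  obtain ⟨hnt, hsub⟩ := hirr
  -- group action cancellation
  have hcancel : ∀ (h : G) (w : V), ρ h (ρ h⁻¹ w) = w := by
    intro h w
    have : (ρ h * ρ h⁻¹) w = w := by rw [← map_mul, mul_inv_cancel, map_one]; rfl
    exact this
  -- rewritten invariance: B (ρ g v) (ρ (ι g) w) = B v w
  have hinv' : ∀ (B' : V →ₗ[ℂ] V →ₗ[ℂ] ℂ),
      (∀ (g : G) (v w : V), B' (ρ (ι g) v) (ρ g w) = B' v w) →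
      ∀ (g : G) (v w : V), B' (ρ g v) (ρ (ι g) w) = B' v w := by
    intro B' h g v w
    have := h (ι g) v w
    rwa [hι] at this
  -- Step 1 : bijectivity of v ↦ B v
  have hkerinv : ∀ g : G, ∀ v ∈ LinearMap.ker B, ρ g v ∈ LinearMap.ker B := by
    intro g v hv
    rw [LinearMap.mem_ker] at hv ⊢
    ext w
    have := hinv' B hinv g v (ρ (ι g)⁻¹ w)
    rw [hcancel (ι g) w] at this
    simp [this, hv]
  have hker : LinearMap.ker B = ⊥ := by
    rcases hsub (LinearMap.ker B) hkerinv with h | h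
    · exact h
    · exfalso
      apply hB
      ext v w
      have hv : v ∈ LinearMap.ker B := h ▸ Submodule.mem_top
      simp [LinearMap.mem_ker.mp hv]
  have hinj : Function.Injective (fun v : V => B v) := by
    rw [← LinearMap.ker_eq_bot] at *
    exact hker
  have hbij : Function.Bijective (fun v : V => B v) := by
    refine ⟨hinj, ?_⟩
    have : Function.Injective B := hinj
    exact (LinearMap.injective_iff_surjective_of_finrank_eq_finrank
      (Subspace.dual_finrank_eq).symm).mp this
  -- the linear equivalence induced by B
  let e : V ≃ₗ[ℂ] (V →ₗ[ℂ] ℂ) := LinearEquiv.ofBijective B hbij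
  -- Step 2 : uniqueness
  have huniq : ∀ B' : V →ₗ[ℂ] V →ₗ[ℂ] ℂ,
      (∀ (g : G) (v w : V), B' (ρ (ι g) v) (ρ g w) = B' v w) → ∃ c : ℂ, B' = c • B := by
    intro B' hinvB'
    set f : Module.End ℂ V := e.symm.toLinearMap ∘ₗ B' with hf
    have hBf : ∀ v : V, B (f v) = B' v := by
      intro v
      have : e (f v) = B' v := e.apply_symm_apply (B' v)
      exact this
    have hcomm : ∀ (h : G) (v : V), f (ρ h v) = ρ h (f v) := by
      intro h v
      apply hbij.injective
      show B (f (ρ h v)) = B (ρ h (f v))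
      ext w
      have hw : ρ (ι h) (ρ (ι h)⁻¹ w) = w := hcancel (ι h) w
      set w' := ρ (ι h)⁻¹ w with hw'
      calc B (f (ρ h v)) w = B' (ρ h v) w := by rw [hBf]
        _ = B' (ρ h v) (ρ (ι h) w') := by rw [hw]
        _ = B' v w' := hinv' B' hinvB' h v w'
        _ = B (f v) w' := by rw [hBf]
        _ = B (ρ h (f v)) (ρ (ι h) w') := (hinv' B hinv h (f v) w').symm
        _ = B (ρ h (f v)) w := by rw [hw]
    obtain ⟨c, hc⟩ := Module.End.exists_eigenvalue f
    have hEinv : ∀ g : G, ∀ v ∈ Module.End.eigenspace f c,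
        ρ g v ∈ Module.End.eigenspace f c := by
      intro g v hv
      rw [Module.End.mem_eigenspace_iff] at hv ⊢
      simp [hcomm g v, hv]
    have hE : Module.End.eigenspace f c = ⊤ := by
      rcases hsub (Module.End.eigenspace f c) hEinv with h | h
      · exact absurd h hc
      · exact h
    refine ⟨c, ?_⟩
    ext v w
    have hv : f v = c • v := Module.End.mem_eigenspace_iff.mp (hE ▸ Submodule.mem_top)
    have := hBf v
    rw [hv] at this
    rw [← this]
    simp
  -- Step 3 : the sign
  have hflipinv : ∀ (g : G) (v w : V), B.flip (ρ (ι g) v) (ρ g w) = B.flip v w := by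
    intro g v w
    exact hinv' B hinv g w v
  obtain ⟨ε, hε⟩ := huniq B.flip hflipinv
  have hεeq : ∀ v w : V, B w v = ε * B v w := by
    intro v w
    have h := congrArg (fun F : V →ₗ[ℂ] V →ₗ[ℂ] ℂ => F v w) hε
    simpa using h
  obtain ⟨v₀, w₀, hvw⟩ : ∃ v w : V, B v w ≠ 0 := by
    by_contra h
    push_neg at h
    exact hB (by ext v w; simp [h])
  have hε2 : ε * ε = 1 := by
    have h1 : B v₀ w₀ = ε * B w₀ v₀ := hεeq w₀ v₀
    have h2 : B w₀ v₀ = ε * B v₀ w₀ := hεeq v₀ w₀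
    rw [h2] at h1
    have h3 : (ε * ε - 1) * B v₀ w₀ = 0 := by linear_combination -h1
    rcases mul_eq_zero.mp h3 with h4 | h4
    · exact sub_eq_zero.mp h4
    · exact absurd h4 hvw
  refine ⟨huniq, hbij, ε, mul_self_eq_one_iff.mp hε2, ?_⟩
  intro B' hB' hinvB' v w
  obtain ⟨c, hc⟩ := huniq B' hinvB'
  have : B' v w = c * B v w := by rw [hc]; simp
  have h2 : B' w v = c * B w v := by rw [hc]; simp
  rw [this, h2, hεeq w v]
  ring
end
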